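/- Let b be a real number with b > 0. Then erfc(b) = (b/π) * exp(-b²) * ∫_{0}^{∞} exp(-t) / ((t + b²) * √t) dt. -/

import Mathlib

open MeasureTheory

/-- The error function: erf(z) = (2/√π) ∫_0^z exp(-u²) du. -/
noncomputable def erf (z : ℝ) : ℝ :=
  (2 / Real.sqrt Real.pi) * ∫ u in (0:ℝ)..z, Real.exp (-u ^ 2)

/-- The complementary error function. -/
noncomputable def erfc (z : ℝ) : ℝ := 1 - erf z

/-!
Substituting `t = b²x²` turns the integral into `(2/b) ∫₀^∞ e^{-b²x²} / (1 + x²) dx`.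
Since `e^{-(1+x²)b²} / (1 + x²) = ∫_b^∞ 2u e^{-(1+x²)u²} du`, swapping the order of integration
leaves the Gaussian inner integral `∫₀^∞ 2u e^{-(1+x²)u²} dx = √π e^{-u²}`, so
`e^{-b²} ∫₀^∞ e^{-b²x²} / (1 + x²) dx = √π ∫_b^∞ e^{-u²} du = (π/2) erfc b`.
-/

open Real Set Filter Topology

theorem erfc_eq_integral_Ioi (b : ℝ) :
    erfc b = 2 / √π * ∫ u in Ioi b, exp (-u ^ 2) := by
  have hint : Integrable fun u : ℝ => exp (-u ^ 2) := by
    simpa using integrable_exp_neg_mul_sq one_pos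
  have hsplit := intervalIntegral.integral_interval_add_Ioi (a := 0) (b := b)
    hint.integrableOn hint.integrableOn
  have hgauss : ∫ u in Ioi (0 : ℝ), exp (-u ^ 2) = √π / 2 := by
    simpa using integral_gaussian_Ioi 1
  rw [erfc, erf, eq_sub_of_add_eq hsplit, hgauss]
  field_simp
  ring

theorem integral_Ioi_mul_exp_neg_mul_sq {c : ℝ} (hc : 0 < c) (b : ℝ) :
    ∫ u in Ioi b, 2 * u * exp (-c * u ^ 2) = exp (-c * b ^ 2) / c := by
  have hderiv (u : ℝ) :
      HasDerivAt (fun u => -exp (-c * u ^ 2) / c) (2 * u * exp (-c * u ^ 2)) u := by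
    refine (((hasDerivAt_pow 2 u).const_mul (-c)).exp.neg.div_const c).congr_deriv ?_
    field_simp
    ring
  have hlim : Tendsto (fun u => -exp (-c * u ^ 2) / c) atTop (𝓝 0) := by
    have h : Tendsto (fun u : ℝ => -c * u ^ 2) atTop atBot :=
      (tendsto_pow_atTop two_ne_zero).const_mul_atTop_of_neg (neg_neg_of_pos hc)
    simpa using (tendsto_exp_atBot.comp h).neg.div_const c
  rw [integral_Ioi_of_hasDerivAt_of_tendsto' (fun u _ => hderiv u) _ hlim]
  · ring
  · simpa [mul_assoc] using ((integrable_mul_exp_neg_mul_sq hc).const_mul 2).integrableOn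

theorem integral_Ioi_mul_exp_neg_one_add_sq_mul_sq {u : ℝ} (hu : 0 < u) :
    ∫ x in Ioi (0 : ℝ), 2 * u * exp (-(1 + x ^ 2) * u ^ 2) = √π * exp (-u ^ 2) := by
  have hsplit (x : ℝ) : 2 * u * exp (-(1 + x ^ 2) * u ^ 2)
      = 2 * u * exp (-u ^ 2) * exp (-u ^ 2 * x ^ 2) := by
    rw [mul_assoc (2 * u), ← exp_add]
    ring_nf
  simp_rw [hsplit]
  rw [integral_const_mul, integral_gaussian_Ioi, sqrt_div pi_nonneg, sqrt_sq hu.le]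
  field_simp

theorem integrable_mul_exp_neg_one_add_sq_mul_sq {b : ℝ} (hb : 0 ≤ b) :
    Integrable (Function.uncurry fun x u : ℝ => 2 * u * exp (-(1 + x ^ 2) * u ^ 2))
      ((volume.restrict (Ioi 0)).prod (volume.restrict (Ioi b))) := by
  refine (integrable_prod_iff (by fun_prop)).mpr ⟨.of_forall fun x => ?_, ?_⟩
  · have := (integrable_mul_exp_neg_mul_sq (by positivity : (0 : ℝ) < 1 + x ^ 2)).const_mul 2
    simpa [IntegrableOn, mul_assoc] using this.integrableOn
  · have hnorm (x : ℝ) : ∫ u in Ioi b, ‖2 * u * exp (-(1 + x ^ 2) * u ^ 2)‖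
        = exp (-(1 + x ^ 2) * b ^ 2) / (1 + x ^ 2) := by
      rw [← integral_Ioi_mul_exp_neg_mul_sq (by positivity)]
      refine setIntegral_congr_fun measurableSet_Ioi fun u hu => ?_
      have : 0 < u := hb.trans_lt hu
      exact Real.norm_of_nonneg (by positivity)
    simp only [Function.uncurry_apply_pair, hnorm]
    have hmeas : Measurable fun x : ℝ => exp (-(1 + x ^ 2) * b ^ 2) / (1 + x ^ 2) := by fun_prop
    refine integrable_inv_one_add_sq.integrableOn.mono' hmeas.aestronglyMeasurable
      (.of_forall fun x => ?_)
    rw [Real.norm_of_nonneg (by positivity), div_eq_mul_inv]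
    refine mul_le_of_le_one_left (by positivity) (exp_le_one_iff.mpr ?_)
    nlinarith [sq_nonneg x, sq_nonneg b]

theorem integral_Ioi_exp_neg_mul_sq_div_one_add_sq {b : ℝ} (hb : 0 ≤ b) :
    ∫ x in Ioi (0 : ℝ), exp (-b ^ 2 * x ^ 2) / (1 + x ^ 2) = π / 2 * exp (b ^ 2) * erfc b := by
  have htail (x : ℝ) : exp (-b ^ 2) * (exp (-b ^ 2 * x ^ 2) / (1 + x ^ 2))
      = ∫ u in Ioi b, 2 * u * exp (-(1 + x ^ 2) * u ^ 2) := by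
    rw [integral_Ioi_mul_exp_neg_mul_sq (by positivity), mul_div_assoc', ← exp_add]
    ring_nf
  have hfubini : exp (-b ^ 2) * ∫ x in Ioi (0 : ℝ), exp (-b ^ 2 * x ^ 2) / (1 + x ^ 2)
      = √π * ∫ u in Ioi b, exp (-u ^ 2) := by
    rw [← integral_const_mul, ← integral_const_mul]
    simp_rw [htail]
    rw [integral_integral_swap (integrable_mul_exp_neg_one_add_sq_mul_sq hb)]
    exact setIntegral_congr_fun measurableSet_Ioi fun u hu =>
      integral_Ioi_mul_exp_neg_one_add_sq_mul_sq (hb.trans_lt hu)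
  calc ∫ x in Ioi (0 : ℝ), exp (-b ^ 2 * x ^ 2) / (1 + x ^ 2)
      = exp (b ^ 2) *
          (exp (-b ^ 2) * ∫ x in Ioi (0 : ℝ), exp (-b ^ 2 * x ^ 2) / (1 + x ^ 2)) := by
        rw [← mul_assoc, ← exp_add, add_neg_cancel, exp_zero, one_mul]
    _ = π / 2 * exp (b ^ 2) * erfc b := by
        rw [hfubini, erfc_eq_integral_Ioi]
        field_simp
        rw [sq_sqrt pi_nonneg, mul_comm]

theorem integral_Ioi_comp_sq {E : Type*} [NormedAddCommGroup E] [NormedSpace ℝ E] (g : ℝ → E) :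
    ∫ x in Ioi (0 : ℝ), (2 * x) • g (x ^ 2) = ∫ y in Ioi 0, g y := by
  rw [← integral_comp_rpow_Ioi_of_pos (g := g) two_pos]
  refine setIntegral_congr_fun measurableSet_Ioi fun x _ => ?_
  norm_num

theorem integral_Ioi_exp_neg_div_add_sq_mul_sqrt {b : ℝ} (hb : 0 < b) :
    ∫ t in Ioi (0 : ℝ), exp (-t) / ((t + b ^ 2) * √t) = π / b * exp (b ^ 2) * erfc b := by
  set f : ℝ → ℝ := fun t => exp (-t) / ((t + b ^ 2) * √t)
  have hsubst : ∀ x ∈ Ioi (0 : ℝ),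
      (2 * (b * x)) • f ((b * x) ^ 2) = 2 / b ^ 2 * (exp (-b ^ 2 * x ^ 2) / (1 + x ^ 2)) := by
    intro x hx
    have : 0 < x := hx
    simp only [f, smul_eq_mul, sqrt_sq (by positivity : 0 ≤ b * x)]
    field_simp
    ring_nf
  calc ∫ t in Ioi (0 : ℝ), f t
      = ∫ s in Ioi (0 : ℝ), (2 * s) • f (s ^ 2) := (integral_Ioi_comp_sq f).symm
    _ = b • ∫ x in Ioi (0 : ℝ), (2 * (b * x)) • f ((b * x) ^ 2) := by
        simpa using (integral_comp_mul_left_Ioi' (fun s => (2 * s) • f (s ^ 2)) 0 hb).symm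
    _ = π / b * exp (b ^ 2) * erfc b := by
        rw [setIntegral_congr_fun measurableSet_Ioi hsubst, integral_const_mul,
          integral_Ioi_exp_neg_mul_sq_div_one_add_sq hb.le, smul_eq_mul]
        field_simp

theorem stmt_4 (b : ℝ) (hb : 0 < b) :
    erfc b =
      (b / Real.pi) * Real.exp (-b ^ 2) *
        ∫ t in Set.Ioi (0:ℝ), Real.exp (-t) / ((t + b ^ 2) * Real.sqrt t) := by
  rw [integral_Ioi_exp_neg_div_add_sq_mul_sqrt hb]
  field_simp
  rw [mul_assoc, ← exp_add, neg_add_cancel, exp_zero, mul_one]
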